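/- Consider the time-invariant single-virus layered SIWS model under Assumptions A1 and A2, and suppose ρ(I − hD_f + hB_f) > 1, so a unique endemic equilibrium z* ≫ 0 exists. Regard z* as a function of the parameter matrices (D_f, B_f) on the open region where Assumptions A1–A2 and ρ(I − hD_f + hB_f) > 1 hold. Then z* depends differentiably on the parameters and, for each i ∈ {1,…,n+m}, the i-th component z*_i is a strictly decreasing function of the i-th diagonal entry of D_f and a strictly increasing function of every entry of the i-th row of B_f: the corresponding partial derivatives satisfy ∂z*_i/∂(D_f)_{ii} < 0 and ∂z*_i/∂(B_f)_{ij} > 0. -/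

import Mathlib

open Matrix Filter

/-- Index type of the layered system: `n` population nodes plus `m` resource nodes. -/
abbrev SIdx (n m : ℕ) := Fin n ⊕ Fin m

/-- Spectral radius of a real square matrix (largest modulus of a complex eigenvalue). -/
noncomputable def specRad {ι : Type} [Fintype ι] [DecidableEq ι] (M : Matrix ι ι ℝ) : ℝ :=
  sSup {r : ℝ | ∃ μ ∈ spectrum ℂ (M.map fun x => (x : ℂ)), r = ‖μ‖}

/-- Irreducibility of a matrix: every node can reach every other node in the associated graph. -/
def Irred {ι : Type} [Fintype ι] [DecidableEq ι] (M : Matrix ι ι ℝ) : Prop :=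
  ∀ i j : ι, i ≠ j → ∃ k : ℕ, (M ^ k) i j ≠ 0

/-- The matrix `Z(z)`: diagonal of the population part of the state, zeros elsewhere. -/
noncomputable def Zm {n m : ℕ} (z : SIdx n m → ℝ) : Matrix (SIdx n m) (SIdx n m) ℝ :=
  Matrix.diagonal (Sum.elim (fun i => z (Sum.inl i)) fun _ => (0 : ℝ))

/-- The layered infection matrix `B_f = [[B, B_w],[C_w, 0]]`. -/
noncomputable def BfM {n m : ℕ} (B : Matrix (Fin n) (Fin n) ℝ) (Bw : Matrix (Fin n) (Fin m) ℝ)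
    (Cw : Matrix (Fin m) (Fin n) ℝ) : Matrix (SIdx n m) (SIdx n m) ℝ :=
  Matrix.fromBlocks B Bw Cw 0

/-- The layered healing matrix `D_f = diag(δ, δ^w)`. -/
noncomputable def DfM {n m : ℕ} (δ : Fin n → ℝ) (δw : Fin m → ℝ) :
    Matrix (SIdx n m) (SIdx n m) ℝ :=
  Matrix.diagonal (Sum.elim δ δw)

/-- One step of the single-virus SIWS dynamics:
`z ↦ z − h (D_f − (I − Z(z)) B_f) z`. -/
noncomputable def step {n m : ℕ} (h : ℝ) (Dfm Bfm : Matrix (SIdx n m) (SIdx n m) ℝ)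
    (z : SIdx n m → ℝ) : SIdx n m → ℝ :=
  z - h • ((Dfm - (1 - Zm z) * Bfm).mulVec z)

/-- The system domain `D = [0,1]^n × [0, w_max]^m`. -/
def inD {n m : ℕ} (wmax : ℝ) (z : SIdx n m → ℝ) : Prop :=
  (∀ i : Fin n, z (Sum.inl i) ∈ Set.Icc (0 : ℝ) 1) ∧
    ∀ j : Fin m, z (Sum.inr j) ∈ Set.Icc (0 : ℝ) wmax

/-- Assumption A1 on the parameters of the single-virus SIWS model. -/
structure A1 {n m : ℕ} (h : ℝ) (δ : Fin n → ℝ) (δw : Fin m → ℝ)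
    (B : Matrix (Fin n) (Fin n) ℝ) (Bw : Matrix (Fin n) (Fin m) ℝ)
    (Cw : Matrix (Fin m) (Fin n) ℝ) (wmax : ℝ) : Prop where
  h_pos : 0 < h
  delta_pos : ∀ i, 0 < δ i
  deltaw_pos : ∀ j, 0 < δw j
  B_nonneg : ∀ i j, 0 ≤ B i j
  Bw_nonneg : ∀ i j, 0 ≤ Bw i j
  Cw_nonneg : ∀ j k, 0 ≤ Cw j k
  Cw_row_pos : ∀ j, ∃ k, 0 < Cw j k
  wmax_pos : 0 < wmax
  ratio_mem : ∀ j, (∑ k, Cw j k) / δw j ∈ Set.Icc (0 : ℝ) wmax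
  h_delta : ∀ i, h * δ i ∈ Set.Ioc (0 : ℝ) 1
  h_deltaw : ∀ j, h * δw j ∈ Set.Ioc (0 : ℝ) 1
  h_beta : ∀ i, h * ((∑ j, B i j) + ∑ j, Bw i j * wmax) ∈ Set.Icc (0 : ℝ) 1

/-- Assumption A3: `h(δ_i + Σ_j β_{ij} + Σ_j β^w_{ij} w_max) ∈ [0,1]` for all `i`. -/
def A3 {n m : ℕ} (h : ℝ) (δ : Fin n → ℝ) (B : Matrix (Fin n) (Fin n) ℝ)
    (Bw : Matrix (Fin n) (Fin m) ℝ) (wmax : ℝ) : Prop :=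
  ∀ i, h * (δ i + (∑ j, B i j) + ∑ j, Bw i j * wmax) ∈ Set.Icc (0 : ℝ) 1

/-!
The equilibria of the step are the zeros of the residual `F(d, M, z) = d * z - (1 - x) * M z`
(the factor `1 - x` is `1` on the resource nodes). The derivative of `F` in `z` at an endemic
equilibrium, and its secant between two endemic equilibria, are operators
`v ↦ c * v - s * M v` for which the equilibrium itself is a positive supersolution, strict on
the population nodes. As `M` is irreducible, a maximum principle makes such operators injective
and inverse-positive. This gives uniqueness; the implicit function theorem then gives a
differentiable branch of equilibria in each parameter, whose derivative `V` solves
`∂F/∂z V = -∂F/∂parameter`, and the sign of the right-hand side (negative for a healing rate,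
positive for an infection rate) passes to `V`. Existence follows from Tarski's fixed point
theorem, the lower bound being a small multiple of the moduli of an eigenvector for an
eigenvalue of modulus `> 1`. At an entry of `B_f` equal to zero the derivative is two-sided
only after extending the equilibrium linearly to negative entries.
-/

open Topology Set

section SetEntry

variable {ι : Type} [DecidableEq ι]

def setEntry (A : Matrix ι ι ℝ) (i j : ι) (s : ℝ) : Matrix ι ι ℝ :=
  A.updateRow i (Function.update (A i) j s)

theorem setEntry_apply (A : Matrix ι ι ℝ) (i j : ι) (s : ℝ) (p q : ι) :
    setEntry A i j s p q = if p = i ∧ q = j then s else A p q := by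
  rw [setEntry]
  by_cases hp : p = i
  · subst hp
    by_cases hq : q = j <;> simp [hq]
  · simp [hp]

theorem setEntry_nonneg {A : Matrix ι ι ℝ} (hA : ∀ p q, 0 ≤ A p q) (i j : ι) {s : ℝ}
    (hs : 0 ≤ s) (p q : ι) : 0 ≤ setEntry A i j s p q := by
  rw [setEntry_apply]
  split_ifs
  exacts [hs, hA p q]

theorem setEntry_eq_add_smul_single (A : Matrix ι ι ℝ) (i j : ι) (s : ℝ) :
    setEntry A i j s = A + (s - A i j) • Matrix.single i j (1 : ℝ) := by
  ext p q
  rw [setEntry_apply]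
  by_cases hpq : p = i ∧ q = j
  · obtain ⟨rfl, rfl⟩ := hpq
    simp
  · simp only [hpq, if_false, Matrix.add_apply, Matrix.smul_apply, Matrix.single_apply]
    rw [if_neg fun h => hpq ⟨h.1.symm, h.2.symm⟩, smul_zero, add_zero]

theorem update_eq_add_smul_single (d : ι → ℝ) (i : ι) (s : ℝ) :
    Function.update d i s = d - d i • Pi.single i 1 + s • Pi.single i 1 := by
  ext p
  by_cases hp : p = i
  · subst hp
    simp
  · simp [hp]

end SetEntry

namespace Irred

variable {ι : Type} [Fintype ι] [DecidableEq ι] {M : Matrix ι ι ℝ}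

theorem mem_of_forall_adj_mem (hirr : Irred M) {S : Set ι}
    (hS : ∀ p ∈ S, ∀ q, M p q ≠ 0 → q ∈ S) {p : ι} (hp : p ∈ S) (q : ι) : q ∈ S := by
  have hpow : ∀ k, ∀ q, (M ^ k) p q ≠ 0 → q ∈ S := by
    intro k
    induction k with
    | zero =>
      intro q hq
      by_cases hpq : p = q
      · exact hpq ▸ hp
      · simp [Matrix.one_apply_ne hpq] at hq
    | succ k ih =>
      intro q hq
      rw [pow_succ, Matrix.mul_apply] at hq
      obtain ⟨r, -, hr⟩ := Finset.exists_ne_zero_of_sum_ne_zero hq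
      exact hS r (ih r (left_ne_zero_of_mul hr)) q (right_ne_zero_of_mul hr)
  by_cases hpq : p = q
  · exact hpq ▸ hp
  · obtain ⟨k, hk⟩ := hirr p q hpq
    exact hpow k q hk

theorem mono {N : Matrix ι ι ℝ} (hirr : Irred M) (hN : ∀ p q, 0 ≤ N p q)
    (hMN : ∀ p q, M p q ≠ 0 → N p q ≠ 0) : Irred N := by
  have hpow : ∀ k p q, (M ^ k) p q ≠ 0 → 0 < (N ^ k) p q := by
    intro k
    induction k with
    | zero =>
      intro p q hpq
      by_cases h : p = q <;> simp_all
    | succ k ih =>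
      intro p q hpq
      rw [pow_succ, Matrix.mul_apply] at hpq ⊢
      obtain ⟨r, -, hr⟩ := Finset.exists_ne_zero_of_sum_ne_zero hpq
      refine lt_of_lt_of_le ?_ (Finset.single_le_sum (fun r _ =>
        mul_nonneg (Matrix.pow_apply_nonneg hN k p r) (hN r q)) (Finset.mem_univ r))
      exact mul_pos (ih p r (left_ne_zero_of_mul hr))
        (lt_of_le_of_ne (hN r q) (hMN r q (right_ne_zero_of_mul hr)).symm)
  intro p q hpq
  obtain ⟨k, hk⟩ := hirr p q hpq
  exact ⟨k, (hpow k p q hk).ne'⟩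

end Irred

section MaximumPrinciple

variable {ι : Type} [Fintype ι] {M : Matrix ι ι ℝ}

theorem mulVec_apply_nonneg (hM : ∀ p q, 0 ≤ M p q) {u : ι → ℝ} (hu : ∀ p, 0 ≤ u p) (p : ι) :
    0 ≤ (M *ᵥ u) p :=
  Finset.sum_nonneg fun q _ => mul_nonneg (hM p q) (hu q)

theorem mulVec_le_mulVec (hM : ∀ p q, 0 ≤ M p q) {u v : ι → ℝ} (huv : ∀ p, u p ≤ v p) (p : ι) :
    (M *ᵥ u) p ≤ (M *ᵥ v) p :=
  Finset.sum_le_sum fun q _ => mul_le_mul_of_nonneg_left (huv q) (hM p q)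

theorem eq_zero_of_mulVec_apply_eq_zero (hM : ∀ p q, 0 ≤ M p q) {u : ι → ℝ} (hu : ∀ p, 0 ≤ u p)
    {p : ι} (hMu : (M *ᵥ u) p = 0) {q : ι} (hpq : M p q ≠ 0) : u q = 0 := by
  have := (Finset.sum_eq_zero_iff_of_nonneg fun r _ => mul_nonneg (hM p r) (hu r)).mp hMu q
    (Finset.mem_univ q)
  exact (mul_eq_zero.mp this).resolve_left hpq

structure IsStrictSupersolution (M : Matrix ι ι ℝ) (c s z : ι → ℝ) : Prop where
  pos : ∀ p, 0 < z p
  weight_pos : ∀ p, 0 < s p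
  le : ∀ p, s p * (M *ᵥ z) p ≤ c p * z p
  exists_lt : ∃ p, s p * (M *ᵥ z) p < c p * z p

namespace IsStrictSupersolution

variable [DecidableEq ι] {c s z : ι → ℝ}

/-- Maximum principle. If `v / z` had a positive maximum `σ`, the nodes where `v = σ z` would
form a nonempty set that is closed under the edges of `M` and misses the strict node. -/
theorem nonpos_of_le_mulVec (hM : ∀ p q, 0 ≤ M p q) (hirr : Irred M)
    (hz : IsStrictSupersolution M c s z) {v : ι → ℝ}
    (hv : ∀ p, c p * v p ≤ s p * (M *ᵥ v) p) (p : ι) : v p ≤ 0 := by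
  obtain ⟨p₀, hp₀⟩ := hz.exists_lt
  obtain ⟨p₁, -, hp₁⟩ := Finset.exists_max_image Finset.univ (fun p => v p / z p)
    ⟨p₀, Finset.mem_univ p₀⟩
  set σ := v p₁ / z p₁
  have hle : ∀ p, v p ≤ σ * z p := fun p => by
    have := hp₁ p (Finset.mem_univ p)
    rwa [div_le_iff₀ (hz.pos p)] at this
  suffices hσ : σ ≤ 0 from (hle p).trans (mul_nonpos_of_nonpos_of_nonneg hσ (hz.pos p).le)
  by_contra! hσ
  have hMv : ∀ p, (M *ᵥ v) p ≤ σ * (M *ᵥ z) p := fun p => by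
    simpa [Matrix.mulVec_smul] using mulVec_le_mulVec hM (u := v) (v := σ • z) hle p
  let S := {p | v p = σ * z p}
  have hchain : ∀ p ∈ S, (M *ᵥ v) p = σ * (M *ᵥ z) p ∧ c p * z p ≤ s p * (M *ᵥ z) p := by
    intro p hp
    have h1 := hv p
    have h2 := mul_le_mul_of_nonneg_left (hMv p) (hz.weight_pos p).le
    have h3 := mul_le_mul_of_nonneg_left (hz.le p) hσ.le
    rw [show v p = σ * z p from hp] at h1
    constructor
    · nlinarith [hz.weight_pos p]
    · nlinarith
  have hclosed : ∀ p ∈ S, ∀ q, M p q ≠ 0 → q ∈ S := by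
    intro p hp q hpq
    have := eq_zero_of_mulVec_apply_eq_zero hM (u := σ • z - v) (fun r => by simp [hle r])
      (p := p) (by simp [Matrix.mulVec_sub, Matrix.mulVec_smul, (hchain p hp).1]) hpq
    simp only [Pi.sub_apply, Pi.smul_apply, smul_eq_mul] at this
    exact (sub_eq_zero.mp this).symm
  have hp₁S : p₁ ∈ S := (div_mul_cancel₀ _ (hz.pos p₁).ne').symm
  have := (hchain p₀ (hirr.mem_of_forall_adj_mem hclosed hp₁S p₀)).2
  linarith

theorem eq_zero_of_eq_mulVec (hM : ∀ p q, 0 ≤ M p q) (hirr : Irred M)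
    (hz : IsStrictSupersolution M c s z) {v : ι → ℝ}
    (hv : ∀ p, c p * v p = s p * (M *ᵥ v) p) : v = 0 := by
  funext p
  refine le_antisymm (hz.nonpos_of_le_mulVec hM hirr (fun p => (hv p).le) p) ?_
  simpa using hz.nonpos_of_le_mulVec hM hirr (v := -v)
    (fun p => by simp [Matrix.mulVec_neg, hv p]) p

theorem neg_of_le_mulVec (hM : ∀ p q, 0 ≤ M p q) (hirr : Irred M)
    (hz : IsStrictSupersolution M c s z) {v : ι → ℝ}
    (hv : ∀ p, c p * v p ≤ s p * (M *ᵥ v) p) {p₁ : ι}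
    (hp₁ : c p₁ * v p₁ < s p₁ * (M *ᵥ v) p₁) : v p₁ < 0 := by
  have hv₀ := hz.nonpos_of_le_mulVec hM hirr hv
  have hMv : (M *ᵥ v) p₁ ≤ 0 :=
    Finset.sum_nonpos fun q _ => mul_nonpos_of_nonneg_of_nonpos (hM p₁ q) (hv₀ q)
  have := mul_nonpos_of_nonneg_of_nonpos (hz.weight_pos p₁).le hMv
  refine lt_of_le_of_ne (hv₀ p₁) fun h => ?_
  rw [h, mul_zero] at hp₁
  linarith

end IsStrictSupersolution

end MaximumPrinciple

theorem HasDerivAt.matrix_mulVec {ι : Type} [Fintype ι] (A : Matrix ι ι ℝ) {f : ℝ → ι → ℝ}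
    {f' : ι → ℝ} {x : ℝ} (hf : HasDerivAt f f' x) :
    HasDerivAt (fun t => A *ᵥ f t) (A *ᵥ f') x :=
  (Matrix.mulVecLin A).toContinuousLinearMap.hasFDerivAt.comp_hasDerivAt x hf

theorem eventually_forall_mul_lt {ι : Type*} [Finite ι] (a : ι → ℝ) {c : ℝ} (hc : 0 < c) :
    ∀ᶠ ε in 𝓝 (0 : ℝ), ∀ p, ε * a p < c :=
  eventually_all.2 fun p =>
    ((continuous_mul_const (a p)).tendsto' 0 0 (zero_mul _)).eventually_lt_const hc

theorem exists_fixedPt_of_monotoneOn_Icc {α : Type*} [ConditionallyCompleteLattice α]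
    {f : α → α} {a b : α} (hab : a ≤ b) (hf : MonotoneOn f (Icc a b)) (ha : a ≤ f a)
    (hb : f b ≤ b) : ∃ x ∈ Icc a b, f x = x := by
  have : Fact (a ≤ b) := ⟨hab⟩
  have hmaps : ∀ x ∈ Icc a b, f x ∈ Icc a b := fun x hx =>
    ⟨ha.trans (hf ⟨le_rfl, hab⟩ hx hx.1), (hf hx ⟨hab, le_rfl⟩ hx.2).trans hb⟩
  let g : Icc a b →o Icc a b := ⟨fun x => ⟨f x, hmaps x x.2⟩, fun x y hxy => hf x.2 y.2 hxy⟩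
  exact ⟨g.lfp, g.lfp.2, congrArg Subtype.val g.map_lfp⟩

section Spectrum

variable {ι : Type} [Fintype ι] [DecidableEq ι] {N : Matrix ι ι ℝ}

theorem exists_one_lt_norm_of_one_lt_specRad (h : 1 < specRad N) :
    ∃ μ ∈ spectrum ℂ (N.map fun x => (x : ℂ)), 1 < ‖μ‖ := by
  have hne : {r : ℝ | ∃ μ ∈ spectrum ℂ (N.map fun x => (x : ℂ)), r = ‖μ‖}.Nonempty := by
    by_contra hempty
    rw [Set.not_nonempty_iff_eq_empty] at hempty
    norm_num [specRad, hempty] at h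
  obtain ⟨r, ⟨μ, hμ, rfl⟩, hr⟩ := exists_lt_of_lt_csSup hne h
  exact ⟨μ, hμ, hr⟩

/-- The moduli of an eigenvector of a nonnegative matrix form a subsolution. -/
theorem exists_nonneg_subsolution_of_mem_spectrum (hN : ∀ p q, 0 ≤ N p q) {μ : ℂ}
    (hμ : μ ∈ spectrum ℂ (N.map fun x => (x : ℂ))) :
    ∃ u : ι → ℝ, (∀ p, 0 ≤ u p) ∧ (∃ p, 0 < u p) ∧ ∀ p, ‖μ‖ * u p ≤ (N *ᵥ u) p := by
  rw [← Matrix.spectrum_toLin', ← Module.End.hasEigenvalue_iff_mem_spectrum] at hμ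
  obtain ⟨v, hv⟩ := hμ.exists_hasEigenvector
  have hNv : (N.map fun x => (x : ℂ)) *ᵥ v = μ • v := by
    simpa using hv.apply_eq_smul
  obtain ⟨p₀, hp₀⟩ := Function.ne_iff.mp hv.2
  refine ⟨fun p => ‖v p‖, fun p => norm_nonneg _, ⟨p₀, norm_pos_iff.mpr hp₀⟩, fun p => ?_⟩
  calc ‖μ‖ * ‖v p‖ = ‖((N.map fun x => (x : ℂ)) *ᵥ v) p‖ := by simp [hNv]
    _ ≤ ∑ q, ‖(N p q : ℂ) * v q‖ := norm_sum_le _ _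
    _ = (N *ᵥ fun p => ‖v p‖) p := by
      simp [Matrix.mulVec, dotProduct, abs_of_nonneg (hN _ _)]

theorem exists_subsolution_of_one_lt_specRad {h : ℝ} (hh : 0 < h) {d : ι → ℝ}
    {A : Matrix ι ι ℝ} (hA : ∀ p q, 0 ≤ A p q) (hdiag : ∀ p, h * d p ≤ 1)
    (hspec : 1 < specRad (1 - h • Matrix.diagonal d + h • A)) :
    ∃ u : ι → ℝ, (∀ p, 0 ≤ u p) ∧ (∃ p, 0 < u p) ∧
      ∃ c > 0, ∀ p, d p * u p + c * u p ≤ (A *ᵥ u) p := by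
  have hN : ∀ p q, 0 ≤ (1 - h • Matrix.diagonal d + h • A) p q := by
    intro p q
    by_cases hpq : p = q
    · subst hpq
      simp only [Matrix.add_apply, Matrix.sub_apply, Matrix.smul_apply, Matrix.one_apply_eq,
        Matrix.diagonal_apply_eq, smul_eq_mul]
      nlinarith [hdiag p, hA p p]
    · simpa [Matrix.one_apply_ne hpq, Matrix.diagonal_apply_ne _ hpq] using
        mul_nonneg hh.le (hA p q)
  obtain ⟨μ, hμ, hμ1⟩ := exists_one_lt_norm_of_one_lt_specRad hspec
  obtain ⟨u, hu, hu₀, hsub⟩ := exists_nonneg_subsolution_of_mem_spectrum hN hμ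
  refine ⟨u, hu, hu₀, (‖μ‖ - 1) / h, div_pos (by linarith) hh, fun p => ?_⟩
  have := hsub p
  simp only [Matrix.add_mulVec, Matrix.sub_mulVec, Matrix.one_mulVec, Matrix.smul_mulVec,
    Matrix.mulVec_diagonal, Pi.add_apply, Pi.sub_apply, Pi.smul_apply, smul_eq_mul] at this
  rw [div_mul_eq_mul_div, ← le_sub_iff_add_le', div_le_iff₀ hh]
  linarith

end Spectrum

namespace SIWS

variable {n m : ℕ}

def popIndicator : SIdx n m → ℝ := Sum.elim 1 0

def susceptible (z : SIdx n m → ℝ) : SIdx n m → ℝ := 1 - popIndicator * z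

def residual (d : SIdx n m → ℝ) (M : Matrix (SIdx n m) (SIdx n m) ℝ) (z : SIdx n m → ℝ) :
    SIdx n m → ℝ :=
  d * z - susceptible z * (M *ᵥ z)

def IsEndemic (d : SIdx n m → ℝ) (M : Matrix (SIdx n m) (SIdx n m) ℝ) (z : SIdx n m → ℝ) :
    Prop :=
  (∀ p, 0 < z p) ∧ residual d M z = 0

def residualDeriv (d : SIdx n m → ℝ) (M : Matrix (SIdx n m) (SIdx n m) ℝ)
    (z v : SIdx n m → ℝ) : SIdx n m → ℝ :=
  (d + popIndicator * (M *ᵥ z)) * v - susceptible z * (M *ᵥ v)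

theorem popIndicator_nonneg (p : SIdx n m) : 0 ≤ popIndicator p := by
  rcases p with i | j <;> simp [popIndicator]

theorem popIndicator_le_one (p : SIdx n m) : popIndicator p ≤ 1 := by
  rcases p with i | j <;> simp [popIndicator]

theorem one_sub_Zm (z : SIdx n m → ℝ) : 1 - Zm z = Matrix.diagonal (susceptible z) := by
  ext p q
  by_cases h : p = q
  · subst h
    rcases p with i | j <;> simp [Zm, susceptible, popIndicator]
  · simp [Zm, Matrix.one_apply_ne h, h]

theorem step_diagonal (h : ℝ) (d : SIdx n m → ℝ) (M : Matrix (SIdx n m) (SIdx n m) ℝ)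
    (z : SIdx n m → ℝ) : step h (Matrix.diagonal d) M z = z - h • residual d M z := by
  ext p
  simp [step, residual, Matrix.sub_mulVec, one_sub_Zm, ← Matrix.mulVec_mulVec,
    Matrix.mulVec_diagonal]

theorem step_diagonal_eq_self_iff {h : ℝ} (hh : h ≠ 0) {d : SIdx n m → ℝ}
    {M : Matrix (SIdx n m) (SIdx n m) ℝ} {z : SIdx n m → ℝ} :
    step h (Matrix.diagonal d) M z = z ↔ residual d M z = 0 := by
  rw [step_diagonal, sub_eq_self, smul_eq_zero, or_iff_right hh]

theorem residual_sub_residual (d : SIdx n m → ℝ) (M : Matrix (SIdx n m) (SIdx n m) ℝ)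
    (y z : SIdx n m → ℝ) :
    residual d M y - residual d M z =
      (d + popIndicator * (M *ᵥ y)) * (y - z) - susceptible z * (M *ᵥ (y - z)) := by
  simp only [residual, susceptible, Matrix.mulVec_sub]
  ring

namespace IsEndemic

variable {d : SIdx n m → ℝ} {M : Matrix (SIdx n m) (SIdx n m) ℝ} {y z : SIdx n m → ℝ}

theorem susceptible_mul_mulVec (hz : IsEndemic d M z) (p : SIdx n m) :
    susceptible z p * (M *ᵥ z) p = d p * z p :=
  (sub_eq_zero.mp (congrFun hz.2 p)).symm

theorem mulVec_pos (hd : ∀ p, 0 < d p) (hM : ∀ p q, 0 ≤ M p q) (hz : IsEndemic d M z)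
    (p : SIdx n m) : 0 < (M *ᵥ z) p := by
  have hprod := hz.susceptible_mul_mulVec p ▸ mul_pos (hd p) (hz.1 p)
  exact (mulVec_apply_nonneg hM (fun q => (hz.1 q).le) p).lt_of_ne fun h => by
    simp [← h] at hprod

theorem susceptible_pos (hd : ∀ p, 0 < d p) (hM : ∀ p q, 0 ≤ M p q) (hz : IsEndemic d M z)
    (p : SIdx n m) : 0 < susceptible z p :=
  pos_of_mul_pos_left (hz.susceptible_mul_mulVec p ▸ mul_pos (hd p) (hz.1 p))
    (hz.mulVec_pos hd hM p).le

variable [NeZero n]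

/-- The operator `v ↦ (d + popIndicator * M y) * v - susceptible z * M v` is
`residualDeriv d M z` when `y = z`, and the secant of `residual d M` between `z` and `y` in
general (`residual_sub_residual`). -/
theorem isStrictSupersolution (hd : ∀ p, 0 < d p) (hM : ∀ p q, 0 ≤ M p q)
    (hy : IsEndemic d M y) (hz : IsEndemic d M z) :
    IsStrictSupersolution M (d + popIndicator * (M *ᵥ y)) (susceptible z) z := by
  refine ⟨hz.1, hz.susceptible_pos hd hM, fun p => ?_, Sum.inl 0, ?_⟩
  · have := mul_nonneg (mul_nonneg (popIndicator_nonneg p) (hy.mulVec_pos hd hM p).le)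
      (hz.1 p).le
    simp only [Pi.add_apply, Pi.mul_apply, hz.susceptible_mul_mulVec]
    linarith
  · have := mul_pos (hy.mulVec_pos hd hM (Sum.inl 0)) (hz.1 (Sum.inl 0))
    simp only [Pi.add_apply, Pi.mul_apply, hz.susceptible_mul_mulVec, popIndicator,
      Sum.elim_inl, Pi.one_apply]
    linarith

theorem eq (hd : ∀ p, 0 < d p) (hM : ∀ p q, 0 ≤ M p q) (hirr : Irred M) (hy : IsEndemic d M y)
    (hz : IsEndemic d M z) : y = z := by
  refine sub_eq_zero.mp ((hy.isStrictSupersolution hd hM hz).eq_zero_of_eq_mulVec hM hirr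
    fun p => sub_eq_zero.mp ?_)
  simpa [hy.2, hz.2] using (congrFun (residual_sub_residual d M y z) p).symm

theorem residualDeriv_injective (hd : ∀ p, 0 < d p) (hM : ∀ p q, 0 ≤ M p q) (hirr : Irred M)
    (hz : IsEndemic d M z) : Function.Injective (residualDeriv d M z) := by
  intro v w hvw
  refine sub_eq_zero.mp ((hz.isStrictSupersolution hd hM hz).eq_zero_of_eq_mulVec hM hirr
    fun p => sub_eq_zero.mp ?_)
  have := congrFun hvw p
  simp only [residualDeriv, Pi.sub_apply, Pi.mul_apply, Pi.add_apply,
    Matrix.mulVec_sub] at this ⊢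
  linarith

theorem neg_of_residualDeriv_nonpos (hd : ∀ p, 0 < d p) (hM : ∀ p q, 0 ≤ M p q)
    (hirr : Irred M) (hz : IsEndemic d M z) {v : SIdx n m → ℝ}
    (hv : ∀ p, residualDeriv d M z v p ≤ 0) {p₁ : SIdx n m}
    (hp₁ : residualDeriv d M z v p₁ < 0) : v p₁ < 0 :=
  (hz.isStrictSupersolution hd hM hz).neg_of_le_mulVec hM hirr
    (fun p => sub_nonpos.mp (hv p)) (sub_neg.mp hp₁)

theorem pos_of_residualDeriv_nonneg (hd : ∀ p, 0 < d p) (hM : ∀ p q, 0 ≤ M p q)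
    (hirr : Irred M) (hz : IsEndemic d M z) {v : SIdx n m → ℝ}
    (hv : ∀ p, 0 ≤ residualDeriv d M z v p) {p₁ : SIdx n m}
    (hp₁ : 0 < residualDeriv d M z v p₁) : 0 < v p₁ := by
  have hneg : residualDeriv d M z (-v) = -residualDeriv d M z v := by
    simp only [residualDeriv, Matrix.mulVec_neg]
    ring
  simpa using hz.neg_of_residualDeriv_nonpos hd hM hirr (v := -v) (p₁ := p₁)
    (fun p => by simp [hneg, hv p]) (by simp [hneg, hp₁])

end IsEndemic

theorem hasDerivAt_residual_line (d₀ Δd : SIdx n m → ℝ)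
    (M₀ ΔM : Matrix (SIdx n m) (SIdx n m) ℝ) (s₀ a : ℝ) (z v : SIdx n m → ℝ) :
    HasDerivAt
      (fun t => residual (d₀ + (s₀ + t * a) • Δd) (M₀ + (s₀ + t * a) • ΔM) (z + t • v))
      (a • (Δd * z - susceptible z * (ΔM *ᵥ z)) +
        residualDeriv (d₀ + s₀ • Δd) (M₀ + s₀ • ΔM) z v) 0 := by
  have hs : HasDerivAt (fun t : ℝ => s₀ + t * a) a 0 := by
    simpa using ((hasDerivAt_id (0 : ℝ)).mul_const a).const_add s₀
  have hw : HasDerivAt (fun t : ℝ => z + t • v) v 0 := by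
    simpa using ((hasDerivAt_id (0 : ℝ)).smul_const v).const_add z
  have hd : HasDerivAt (fun t => d₀ + (s₀ + t * a) • Δd) (a • Δd) 0 :=
    (hs.smul_const Δd).const_add d₀
  have hsus : HasDerivAt (fun t : ℝ => susceptible (z + t • v)) (-(popIndicator * v)) 0 := by
    simpa [susceptible] using (hw.const_mul popIndicator).const_sub 1
  have hMw : HasDerivAt (fun t => (M₀ + (s₀ + t * a) • ΔM) *ᵥ (z + t • v))
      (M₀ *ᵥ v + (a • (ΔM *ᵥ z) + s₀ • (ΔM *ᵥ v))) 0 := by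
    simp only [Matrix.add_mulVec, Matrix.smul_mulVec]
    refine ((hw.matrix_mulVec M₀).fun_add (hs.fun_smul (hw.matrix_mulVec ΔM))).congr_deriv ?_
    simp [add_comm]
  refine ((hd.fun_mul hw).fun_sub (hsus.fun_mul hMw)).congr_deriv ?_
  ext p
  simp [residualDeriv, susceptible, Matrix.add_mulVec, Matrix.smul_mulVec]
  ring

theorem exists_residual_branch (d₀ Δd : SIdx n m → ℝ) (M₀ ΔM : Matrix (SIdx n m) (SIdx n m) ℝ)
    {s₀ : ℝ} {z : SIdx n m → ℝ} (hz : residual (d₀ + s₀ • Δd) (M₀ + s₀ • ΔM) z = 0)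
    (hinj : Function.Injective (residualDeriv (d₀ + s₀ • Δd) (M₀ + s₀ • ΔM) z)) :
    ∃ ψ : ℝ → SIdx n m → ℝ, ∃ V, ψ s₀ = z ∧ HasDerivAt ψ V s₀ ∧
      (∀ᶠ s in 𝓝 s₀, residual (d₀ + s • Δd) (M₀ + s • ΔM) (ψ s) = 0) ∧
      residualDeriv (d₀ + s₀ • Δd) (M₀ + s₀ • ΔM) z V =
        susceptible z * (ΔM *ᵥ z) - Δd * z := by
  set f := fun x : ℝ × (SIdx n m → ℝ) => residual (d₀ + x.1 • Δd) (M₀ + x.1 • ΔM) x.2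
  have hmulVec : ∀ A : Matrix (SIdx n m) (SIdx n m) ℝ,
      ContDiff ℝ 1 fun x : ℝ × (SIdx n m → ℝ) => A *ᵥ x.2 := fun A =>
    (Matrix.mulVecLin A).toContinuousLinearMap.contDiff.comp contDiff_snd
  have hf : ContDiffAt ℝ 1 f (s₀, z) := by
    have := hmulVec M₀
    have := hmulVec ΔM
    simp only [f, residual, susceptible, Matrix.add_mulVec, Matrix.smul_mulVec]
    fun_prop
  set F := fderiv ℝ f (s₀, z)
  have hF : ∀ w, F w = w.1 • (Δd * z - susceptible z * (ΔM *ᵥ z)) +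
      residualDeriv (d₀ + s₀ • Δd) (M₀ + s₀ • ΔM) z w.2 := fun w =>
    ((hf.differentiableAt one_ne_zero).hasFDerivAt.hasLineDerivAt w).unique
      (hasDerivAt_residual_line d₀ Δd M₀ ΔM s₀ w.1 z w.2)
  set T := F ∘L ContinuousLinearMap.inr ℝ ℝ (SIdx n m → ℝ)
  have hT : ∀ v, T v = residualDeriv (d₀ + s₀ • Δd) (M₀ + s₀ • ΔM) z v := fun v => by
    simp [T, hF]
  have hTinv : T.IsInvertible := by
    have hTinj : Function.Injective T := by
      intro v w hvw
      simpa [hT] using hinj (by simpa [hT] using hvw)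
    exact ⟨(LinearEquiv.ofInjectiveEndo (T : _ →ₗ[ℝ] _) hTinj).toContinuousLinearEquiv, rfl⟩
  refine ⟨hf.implicitFunction one_ne_zero hTinv, _, hf.implicitFunction_apply_self _ _,
    (hf.hasStrictFDerivAt_implicitFunction one_ne_zero hTinv).hasFDerivAt.hasDerivAt, ?_, ?_⟩
  · filter_upwards [hf.eventually_apply_implicitFunction one_ne_zero hTinv] with s hs
    exact hs.trans hz
  · change residualDeriv _ _ _ (-T.inverse (F (1, 0))) = _
    rw [← hT, map_neg, hTinv.self_apply_inverse, hF]
    simp [residualDeriv]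

theorem exists_endemic_branch [NeZero n] (d₀ Δd : SIdx n m → ℝ)
    (M₀ ΔM : Matrix (SIdx n m) (SIdx n m) ℝ) {s₀ : ℝ} {z : SIdx n m → ℝ}
    (hd : ∀ p, 0 < (d₀ + s₀ • Δd) p) (hM : ∀ p q, 0 ≤ (M₀ + s₀ • ΔM) p q)
    (hirr : Irred (M₀ + s₀ • ΔM)) (hz : IsEndemic (d₀ + s₀ • Δd) (M₀ + s₀ • ΔM) z) :
    ∃ ψ : ℝ → SIdx n m → ℝ, ∃ V, ψ s₀ = z ∧ HasDerivAt ψ V s₀ ∧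
      (∀ᶠ s in 𝓝 s₀, IsEndemic (d₀ + s • Δd) (M₀ + s • ΔM) (ψ s)) ∧
      residualDeriv (d₀ + s₀ • Δd) (M₀ + s₀ • ΔM) z V =
        susceptible z * (ΔM *ᵥ z) - Δd * z := by
  obtain ⟨ψ, V, hψ₀, hψ, hres, hV⟩ :=
    exists_residual_branch d₀ Δd M₀ ΔM hz.2 (hz.residualDeriv_injective hd hM hirr)
  refine ⟨ψ, V, hψ₀, hψ, ?_, hV⟩
  have hpos : ∀ᶠ s in 𝓝 s₀, ∀ p, 0 < ψ s p := eventually_all.2 fun p =>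
    ((continuous_apply p).continuousAt.comp hψ.continuousAt).eventually
      (eventually_gt_nhds (by simpa [hψ₀] using hz.1 p))
  filter_upwards [hpos, hres] with s h₁ h₂
  exact ⟨h₁, h₂⟩

section Existence

variable {d : SIdx n m → ℝ} {M : Matrix (SIdx n m) (SIdx n m) ℝ}

theorem mulVec_inr_eq_mulVec_popIndicator_mul (hbr : ∀ j l, M (Sum.inr j) (Sum.inr l) = 0)
    (x : SIdx n m → ℝ) (j : Fin m) :
    (M *ᵥ x) (Sum.inr j) = (M *ᵥ (popIndicator * x)) (Sum.inr j) := by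
  simp [Matrix.mulVec, dotProduct, Fintype.sum_sum_type, hbr, popIndicator]

/-- Solving `residual d M z = 0` for the `z` on its left-hand side. -/
noncomputable def fixedPointMap (d : SIdx n m → ℝ) (M : Matrix (SIdx n m) (SIdx n m) ℝ)
    (z : SIdx n m → ℝ) : SIdx n m → ℝ :=
  fun p => (M *ᵥ z) p / (d p + popIndicator p * (M *ᵥ z) p)

theorem fixedPointMap_monotoneOn (hd : ∀ p, 0 < d p) (hM : ∀ p q, 0 ≤ M p q) :
    MonotoneOn (fixedPointMap d M) (Ici 0) := by
  intro x hx y hy hxy p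
  have hMx := mulVec_apply_nonneg hM hx p
  have hMxy := mulVec_le_mulVec hM hxy p
  have := mul_le_mul_of_nonneg_left hMxy (hd p).le
  simp only [fixedPointMap]
  rw [div_le_div_iff₀ (by nlinarith [hd p, popIndicator_nonneg p])
    (by nlinarith [hd p, popIndicator_nonneg p])]
  nlinarith

theorem residual_eq_zero_of_fixedPointMap_eq (hd : ∀ p, 0 < d p) (hM : ∀ p q, 0 ≤ M p q)
    {z : SIdx n m → ℝ} (hz : 0 ≤ z) (hfix : fixedPointMap d M z = z) : residual d M z = 0 := by
  ext p
  have hden : 0 < d p + popIndicator p * (M *ᵥ z) p := by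
    nlinarith [hd p, popIndicator_nonneg p, mulVec_apply_nonneg hM hz p]
  have := congrFun hfix p
  simp only [fixedPointMap, div_eq_iff hden.ne'] at this
  simp only [residual, susceptible, Pi.sub_apply, Pi.mul_apply, Pi.one_apply, Pi.zero_apply]
  linarith

theorem pos_of_residual_eq_zero (hM : ∀ p q, 0 ≤ M p q) (hirr : Irred M)
    {z : SIdx n m → ℝ} (hz : 0 ≤ z) (hz₀ : ∃ p, 0 < z p) (h : residual d M z = 0) (p : SIdx n m) :
    0 < z p := by
  refine lt_of_le_of_ne (hz p) fun hp => ?_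
  have hclosed : ∀ p ∈ {p | z p = 0}, ∀ q, M p q ≠ 0 → q ∈ {p | z p = 0} := by
    intro p hp q hpq
    have := congrFun h p
    simp [residual, susceptible, show z p = 0 from hp] at this
    exact eq_zero_of_mulVec_apply_eq_zero hM hz this hpq
  obtain ⟨q, hq⟩ := hz₀
  exact hq.ne' (hirr.mem_of_forall_adj_mem hclosed hp.symm q)

theorem fixedPointMap_le (hd : ∀ p, 0 < d p) (hM : ∀ p q, 0 ≤ M p q)
    (hbr : ∀ j l, M (Sum.inr j) (Sum.inr l) = 0) {x : SIdx n m → ℝ} (hx : 0 ≤ x)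
    (hx₁ : ∀ i, x (Sum.inl i) ≤ 1) :
    fixedPointMap d M x ≤
      Sum.elim (fun _ => 1) fun j => (M *ᵥ popIndicator) (Sum.inr j) / d (Sum.inr j) := by
  intro p
  have hMx := mulVec_apply_nonneg hM hx p
  rcases p with i | j
  · simp only [fixedPointMap, popIndicator, Sum.elim_inl, Pi.one_apply, one_mul]
    exact div_le_one_of_le₀ (by linarith [hd (Sum.inl i)]) (by linarith [hd (Sum.inl i)])
  · simp only [fixedPointMap, popIndicator, Sum.elim_inr, Pi.zero_apply, zero_mul, add_zero]
    refine div_le_div_of_nonneg_right ?_ (hd _).le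
    rw [mulVec_inr_eq_mulVec_popIndicator_mul hbr]
    refine mulVec_le_mulVec hM (fun q => ?_) _
    rcases q with k | l <;> simp [popIndicator, hx₁]

theorem smul_le_fixedPointMap_smul (hd : ∀ p, 0 < d p) (hM : ∀ p q, 0 ≤ M p q)
    {u : SIdx n m → ℝ} (hu : ∀ p, 0 ≤ u p) {c : ℝ}
    (hsub : ∀ p, d p * u p + c * u p ≤ (M *ᵥ u) p) {ε : ℝ} (hε : 0 ≤ ε)
    (hεc : ∀ p, ε * (M *ᵥ u) p ≤ c) : ε • u ≤ fixedPointMap d M (ε • u) := by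
  intro p
  have hMu := mulVec_apply_nonneg hM hu p
  have hden : 0 < d p + popIndicator p * (ε * (M *ᵥ u) p) := by
    nlinarith [hd p, popIndicator_nonneg p, mul_nonneg hε hMu]
  simp only [fixedPointMap, Matrix.mulVec_smul, Pi.smul_apply, smul_eq_mul]
  rw [le_div_iff₀ hden]
  have h1 := mul_le_mul_of_nonneg_left (popIndicator_le_one p)
    (mul_nonneg (mul_nonneg hε (hu p)) hMu)
  have h2 := mul_le_mul_of_nonneg_left (hεc p) (hu p)
  have h3 := mul_le_mul_of_nonneg_left (hsub p) hε
  nlinarith [popIndicator_nonneg p]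

/-- Tarski's fixed point theorem for `fixedPointMap` between the subsolution `ε • u` and an
explicit upper bound, which exists because resource nodes do not infect each other. -/
theorem exists_isEndemic (hd : ∀ p, 0 < d p) (hM : ∀ p q, 0 ≤ M p q) (hirr : Irred M)
    (hbr : ∀ j l, M (Sum.inr j) (Sum.inr l) = 0) {u : SIdx n m → ℝ} (hu : ∀ p, 0 ≤ u p)
    (hu₀ : ∃ p, 0 < u p) {c : ℝ} (hc : 0 < c) (hsub : ∀ p, d p * u p + c * u p ≤ (M *ᵥ u) p) :
    ∃ z, IsEndemic d M z := by
  obtain ⟨ε, ⟨hεc, hε₁⟩, hε⟩ := (((eventually_forall_mul_lt (M *ᵥ u) hc).and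
    (eventually_forall_mul_lt u one_pos)).filter_mono nhdsWithin_le_nhds |>.and
      (self_mem_nhdsWithin (s := Ioi 0))).exists
  have hlo : 0 ≤ ε • u := fun p => mul_nonneg (le_of_lt hε) (hu p)
  have hlo_map := smul_le_fixedPointMap_smul hd hM hu hsub (le_of_lt hε) fun p => (hεc p).le
  have hlo_hi := hlo_map.trans (fixedPointMap_le hd hM hbr hlo fun i => (hε₁ _).le)
  obtain ⟨z, hz, hfix⟩ := exists_fixedPt_of_monotoneOn_Icc hlo_hi
    ((fixedPointMap_monotoneOn hd hM).mono fun x hx => hlo.trans hx.1) hlo_map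
    (fixedPointMap_le hd hM hbr (hlo.trans hlo_hi) fun i => le_rfl)
  have hz₀ : 0 ≤ z := hlo.trans hz.1
  have hres := residual_eq_zero_of_fixedPointMap_eq hd hM hz₀ hfix
  obtain ⟨p, hp⟩ := hu₀
  exact ⟨z, pos_of_residual_eq_zero hM hirr hz₀ ⟨p, (mul_pos hε hp).trans_le (hz.1 p)⟩ hres, hres⟩

end Existence

open Classical in
noncomputable def endemicEquilibrium (d : SIdx n m → ℝ) (M : Matrix (SIdx n m) (SIdx n m) ℝ) :
    SIdx n m → ℝ :=
  if h : ∃ z, IsEndemic d M z then h.choose else 0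

theorem endemicEquilibrium_eq [NeZero n] {d : SIdx n m → ℝ} {M : Matrix (SIdx n m) (SIdx n m) ℝ}
    (hd : ∀ p, 0 < d p) (hM : ∀ p q, 0 ≤ M p q) (hirr : Irred M) {z : SIdx n m → ℝ}
    (hz : IsEndemic d M z) : endemicEquilibrium d M = z := by
  have h : ∃ z, IsEndemic d M z := ⟨z, hz⟩
  rw [endemicEquilibrium, dif_pos h]
  exact h.choose_spec.eq hd hM hirr hz

noncomputable def entrySensitivity (d : SIdx n m → ℝ) (A : Matrix (SIdx n m) (SIdx n m) ℝ)
    (p q : SIdx n m) : SIdx n m → ℝ :=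
  derivWithin (fun s => endemicEquilibrium d (setEntry A p q s)) (Ici 0) 0

/-- The equilibrium extended to all matrices by its first-order expansion at the nonnegative
part; this makes it differentiable in an entry of `B_f` that vanishes. -/
noncomputable def extendedEquilibrium (d : SIdx n m → ℝ) (M : Matrix (SIdx n m) (SIdx n m) ℝ) :
    SIdx n m → ℝ :=
  endemicEquilibrium d (M.map (max · 0)) +
    ∑ p, ∑ q, min (M p q) 0 • entrySensitivity d (M.map (max · 0)) p q

section Extension

variable {d : SIdx n m → ℝ} {A : Matrix (SIdx n m) (SIdx n m) ℝ}

theorem extendedEquilibrium_of_nonneg (hA : ∀ p q, 0 ≤ A p q) :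
    extendedEquilibrium d A = endemicEquilibrium d A := by
  have hmax : A.map (max · 0) = A := by
    ext p q
    exact max_eq_left (hA p q)
  simp [extendedEquilibrium, hmax, min_eq_right (hA _ _)]

theorem extendedEquilibrium_setEntry_of_nonpos (hA : ∀ p q, 0 ≤ A p q) {i j : SIdx n m}
    (hij : A i j = 0) {s : ℝ} (hs : s ≤ 0) :
    extendedEquilibrium d (setEntry A i j s) =
      endemicEquilibrium d A + s • entrySensitivity d A i j := by
  have hmax : (setEntry A i j s).map (max · 0) = A := by
    ext p q
    rw [Matrix.map_apply, setEntry_apply]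
    split_ifs with hpq
    · rw [hpq.1, hpq.2, hij, max_eq_right hs]
    · exact max_eq_left (hA p q)
  have hmin : ∀ p q, min (setEntry A i j s p q) 0 =
      if p = i ∧ q = j then s else 0 := by
    intro p q
    rw [setEntry_apply]
    split_ifs
    · exact min_eq_left hs
    · exact min_eq_right (hA p q)
  rw [extendedEquilibrium, hmax]
  simp_rw [hmin, ite_smul, zero_smul]
  simp [ite_and, Finset.sum_ite_eq']

end Extension

theorem exists_neg_hasDerivAt_extendedEquilibrium_update [NeZero n] {d : SIdx n m → ℝ}
    {A : Matrix (SIdx n m) (SIdx n m) ℝ} (hd : ∀ p, 0 < d p) (hA : ∀ p q, 0 ≤ A p q)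
    (hirr : Irred A) {z : SIdx n m → ℝ} (hz : IsEndemic d A z) (i : SIdx n m) :
    ∃ v < 0, HasDerivAt (fun s => extendedEquilibrium (Function.update d i s) A i) v (d i) := by
  set e : SIdx n m → ℝ := Pi.single i 1
  have hline : ∀ s, d - d i • e + s • e = Function.update d i s := fun s =>
    (update_eq_add_smul_single d i s).symm
  have hA0 : ∀ s : ℝ, A + s • (0 : Matrix (SIdx n m) (SIdx n m) ℝ) = A := by simp
  obtain ⟨ψ, V, -, hψ, hev, hV⟩ := exists_endemic_branch (d - d i • e) e A 0 (s₀ := d i)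
    (by simpa using hd) (by simpa using hA) (by simpa using hirr) (by simpa using hz)
  simp only [sub_add_cancel, hA0, Matrix.zero_mulVec, mul_zero, zero_sub] at hV
  have hV' : ∀ p, residualDeriv d A z V p = -(e p * z p) := fun p => congrFun hV p
  refine ⟨V i, hz.neg_of_residualDeriv_nonpos hd hA hirr (fun p => ?_) ?_, ?_⟩
  · rw [hV', neg_nonpos]
    exact mul_nonneg (by by_cases hp : p = i <;> simp [e, hp]) (hz.1 p).le
  · simpa [hV', e] using hz.1 i
  · refine (hasDerivAt_pi.1 hψ i).congr_of_eventuallyEq ?_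
    filter_upwards [hev, eventually_gt_nhds (hd i)] with s hs hs₀
    rw [hline, hA0] at hs
    have hds : ∀ p, 0 < Function.update d i s p := fun p => by
      by_cases hp : p = i
      · simpa [hp] using hs₀
      · simpa [hp] using hd p
    rw [extendedEquilibrium_of_nonneg hA, endemicEquilibrium_eq hds hA hirr hs]

theorem exists_endemic_branch_setEntry [NeZero n] {d : SIdx n m → ℝ}
    {A : Matrix (SIdx n m) (SIdx n m) ℝ} (hd : ∀ p, 0 < d p) (hA : ∀ p q, 0 ≤ A p q)
    (hirr : Irred A) {z : SIdx n m → ℝ} (hz : IsEndemic d A z) (i j : SIdx n m) :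
    ∃ ψ : ℝ → SIdx n m → ℝ, ∃ V, 0 < V i ∧ HasDerivAt ψ V (A i j) ∧
      ∀ᶠ s in 𝓝 (A i j), (0 < s ∨ s = A i j) →
        endemicEquilibrium d (setEntry A i j s) = ψ s := by
  set E : Matrix (SIdx n m) (SIdx n m) ℝ := Matrix.single i j 1
  have hline : ∀ s, A - A i j • E + s • E = setEntry A i j s := by
    intro s
    rw [setEntry_eq_add_smul_single, sub_smul]
    abel
  have hd0 : ∀ s : ℝ, d + s • (0 : SIdx n m → ℝ) = d := by simp
  obtain ⟨ψ, V, -, hψ, hev, hV⟩ := exists_endemic_branch d 0 (A - A i j • E) E (s₀ := A i j)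
    (by simpa using hd) (by simpa using hA) (by simpa using hirr) (by simpa using hz)
  simp only [sub_add_cancel, hd0, zero_mul, sub_zero, E, Matrix.single_mulVec] at hV
  have hV' : ∀ p, residualDeriv d A z V p =
      susceptible z p * Function.update (0 : SIdx n m → ℝ) i (1 * z j) p := fun p => congrFun hV p
  have hsus := hz.susceptible_pos hd hA
  refine ⟨ψ, V, hz.pos_of_residualDeriv_nonneg hd hA hirr (fun p => ?_) ?_, hψ, ?_⟩
  · rw [hV']
    refine mul_nonneg (hsus p).le ?_
    by_cases hp : p = i
    · simpa [hp] using (hz.1 j).le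
    · simp [hp]
  · simpa [hV'] using mul_pos (hsus i) (hz.1 j)
  · filter_upwards [hev] with s hs hgood
    rw [hline, hd0] at hs
    have hs₀ : 0 ≤ s := hgood.elim le_of_lt fun h => h ▸ hA i j
    have hN := setEntry_nonneg hA i j hs₀
    refine endemicEquilibrium_eq hd hN (hirr.mono hN fun p q hpq => ?_) hs
    rw [setEntry_apply]
    split_ifs with h
    · rcases hgood with hgood | rfl
      · exact hgood.ne'
      · rwa [← h.1, ← h.2]
    · exact hpq

theorem hasDerivAt_extendedEquilibrium_setEntry {d : SIdx n m → ℝ}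
    {A : Matrix (SIdx n m) (SIdx n m) ℝ}
    (hA : ∀ p q, 0 ≤ A p q) {i j : SIdx n m} {ψ : ℝ → SIdx n m → ℝ} {V : SIdx n m → ℝ}
    (hψ : HasDerivAt ψ V (A i j))
    (hbranch : ∀ᶠ s in 𝓝 (A i j), (0 < s ∨ s = A i j) →
      endemicEquilibrium d (setEntry A i j s) = ψ s) :
    HasDerivAt (fun s => extendedEquilibrium d (setEntry A i j s)) V (A i j) := by
  have hext : ∀ s, 0 ≤ s → extendedEquilibrium d (setEntry A i j s) =
      endemicEquilibrium d (setEntry A i j s) := fun s hs =>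
    extendedEquilibrium_of_nonneg (setEntry_nonneg hA i j hs)
  rcases (hA i j).lt_or_eq with hpos | hzero
  · refine hψ.congr_of_eventuallyEq ?_
    filter_upwards [hbranch, eventually_gt_nhds hpos] with s hs hs₀
    rw [hext s hs₀.le, hs (Or.inl hs₀)]
  rw [← hzero] at hψ hbranch ⊢
  have hright : HasDerivWithinAt (fun s => endemicEquilibrium d (setEntry A i j s))
      V (Ici 0) 0 := by
    refine hψ.hasDerivWithinAt.congr_of_eventuallyEq ?_ (hbranch.self_of_nhds (Or.inr rfl))
    filter_upwards [nhdsWithin_le_nhds hbranch, self_mem_nhdsWithin] with s hs hs₀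
    exact hs ((lt_or_eq_of_le hs₀).imp_right Eq.symm)
  have hsens : entrySensitivity d A i j = V := hright.derivWithin (uniqueDiffWithinAt_Ici 0)
  have hleft : HasDerivWithinAt (fun s => extendedEquilibrium d (setEntry A i j s))
      V (Iic 0) 0 := by
    have haffine : HasDerivAt (fun s : ℝ => endemicEquilibrium d A + s • V) V 0 := by
      simpa using ((hasDerivAt_id (0 : ℝ)).smul_const V).const_add (endemicEquilibrium d A)
    refine haffine.hasDerivWithinAt.congr_of_mem (fun s hs => ?_) self_mem_Iic
    rw [extendedEquilibrium_setEntry_of_nonpos hA hzero.symm hs, hsens]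
  have := hleft.union (hright.congr_of_mem (fun s hs => hext s hs) self_mem_Ici)
  rwa [Iic_union_Ici, hasDerivWithinAt_univ] at this

theorem exists_pos_hasDerivAt_extendedEquilibrium_setEntry [NeZero n] {d : SIdx n m → ℝ}
    {A : Matrix (SIdx n m) (SIdx n m) ℝ} (hd : ∀ p, 0 < d p) (hA : ∀ p q, 0 ≤ A p q)
    (hirr : Irred A) {z : SIdx n m → ℝ} (hz : IsEndemic d A z) (i j : SIdx n m) :
    ∃ v, 0 < v ∧
      HasDerivAt (fun s => extendedEquilibrium d (setEntry A i j s) i) v (A i j) := by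
  obtain ⟨ψ, V, hVi, hψ, hbranch⟩ := exists_endemic_branch_setEntry hd hA hirr hz i j
  exact ⟨V i, hVi, hasDerivAt_pi.1 (hasDerivAt_extendedEquilibrium_setEntry hA hψ hbranch) i⟩

end SIWS

theorem BfM_inr_inr {n m : ℕ} (B : Matrix (Fin n) (Fin n) ℝ) (Bw : Matrix (Fin n) (Fin m) ℝ)
    (Cw : Matrix (Fin m) (Fin n) ℝ) (j l : Fin m) : BfM B Bw Cw (Sum.inr j) (Sum.inr l) = 0 :=
  rfl

namespace A1

variable {n m : ℕ} {h : ℝ} {δ : Fin n → ℝ} {δw : Fin m → ℝ} {B : Matrix (Fin n) (Fin n) ℝ}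
  {Bw : Matrix (Fin n) (Fin m) ℝ} {Cw : Matrix (Fin m) (Fin n) ℝ} {wmax : ℝ}

theorem neZero [Nonempty (SIdx n m)] (hA1 : A1 h δ δw B Bw Cw wmax) : NeZero n := by
  obtain (i | j) := Classical.arbitrary (SIdx n m)
  · exact NeZero.of_pos i.pos
  · exact NeZero.of_pos (hA1.Cw_row_pos j).choose.pos

theorem healing_pos (hA1 : A1 h δ δw B Bw Cw wmax) (p : SIdx n m) : 0 < Sum.elim δ δw p := by
  rcases p with i | j
  exacts [hA1.delta_pos i, hA1.deltaw_pos j]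

theorem mul_healing_le_one (hA1 : A1 h δ δw B Bw Cw wmax) (p : SIdx n m) :
    h * Sum.elim δ δw p ≤ 1 := by
  rcases p with i | j
  exacts [(hA1.h_delta i).2, (hA1.h_deltaw j).2]

theorem BfM_nonneg (hA1 : A1 h δ δw B Bw Cw wmax) (p q : SIdx n m) : 0 ≤ BfM B Bw Cw p q := by
  rcases p with i | j <;> rcases q with k | l
  exacts [hA1.B_nonneg i k, hA1.Bw_nonneg i l, hA1.Cw_nonneg j k, le_rfl]

end A1

open SIWS in
/-- the endemic equilibrium, viewed as a function of the parameters `(D_f, B_f)`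
on the region where A1, A2 and `ρ(I − hD_f + hB_f) > 1` hold, depends differentiably on the
parameters; each component `z*_i` is strictly decreasing in the `i`-th diagonal entry of
`D_f` (negative partial derivative) and strictly increasing in every entry of the `i`-th row
of `B_f` (positive partial derivative). -/
theorem stmt9 {n m : ℕ} (h : ℝ) :
    ∃ g : (SIdx n m → ℝ) → Matrix (SIdx n m) (SIdx n m) ℝ → (SIdx n m → ℝ),
      ∀ (δ : Fin n → ℝ) (δw : Fin m → ℝ) (B : Matrix (Fin n) (Fin n) ℝ)
        (Bw : Matrix (Fin n) (Fin m) ℝ) (Cw : Matrix (Fin m) (Fin n) ℝ) (wmax : ℝ),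
        A1 h δ δw B Bw Cw wmax → Irred (BfM B Bw Cw) →
        1 < specRad (1 - h • DfM δ δw + h • BfM B Bw Cw) →
        (step h (DfM δ δw) (BfM B Bw Cw) (g (Sum.elim δ δw) (BfM B Bw Cw)) =
            g (Sum.elim δ δw) (BfM B Bw Cw)) ∧
        (∀ p, 0 < g (Sum.elim δ δw) (BfM B Bw Cw) p) ∧
        (∀ y : SIdx n m → ℝ, (∀ p, 0 < y p) →
            step h (DfM δ δw) (BfM B Bw Cw) y = y → y = g (Sum.elim δ δw) (BfM B Bw Cw)) ∧
        (∀ i : SIdx n m, ∃ v : ℝ, v < 0 ∧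
            HasDerivAt
              (fun s => g (Function.update (Sum.elim δ δw) i s) (BfM B Bw Cw) i) v
              (Sum.elim δ δw i)) ∧
        (∀ i j : SIdx n m, (i.isLeft = true ∨ j.isLeft = true) → ∃ v : ℝ, 0 < v ∧
            HasDerivAt
              (fun s => g (Sum.elim δ δw)
                (Matrix.updateRow (BfM B Bw Cw) i
                  (Function.update (BfM B Bw Cw i) j s)) i) v
              (BfM B Bw Cw i j)) := by
  refine ⟨extendedEquilibrium, fun δ δw B Bw Cw wmax hA1 hirr hspec => ?_⟩
  rcases isEmpty_or_nonempty (SIdx n m) with hempty | hnonempty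
  · exact ⟨Subsingleton.elim _ _, isEmptyElim, fun _ _ _ => Subsingleton.elim _ _, isEmptyElim,
      fun i => isEmptyElim i⟩
  have := hA1.neZero
  have hd := hA1.healing_pos
  have hA := hA1.BfM_nonneg
  obtain ⟨u, hu, hu₀, c, hc, hsub⟩ :=
    exists_subsolution_of_one_lt_specRad hA1.h_pos hA hA1.mul_healing_le_one hspec
  obtain ⟨z, hz⟩ := exists_isEndemic hd hA hirr (BfM_inr_inr B Bw Cw) hu hu₀ hc hsub
  have hg : extendedEquilibrium (Sum.elim δ δw) (BfM B Bw Cw) = z :=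
    (extendedEquilibrium_of_nonneg hA).trans (endemicEquilibrium_eq hd hA hirr hz)
  have hfixed : ∀ y, step h (DfM δ δw) (BfM B Bw Cw) y = y ↔
      residual (Sum.elim δ δw) (BfM B Bw Cw) y = 0 := fun y =>
    step_diagonal_eq_self_iff hA1.h_pos.ne'
  refine ⟨?_, ?_, fun y hy hstep => ?_,
    exists_neg_hasDerivAt_extendedEquilibrium_update hd hA hirr hz,
    fun i j _ => exists_pos_hasDerivAt_extendedEquilibrium_setEntry hd hA hirr hz i j⟩
  · rw [hg]
    exact (hfixed z).2 hz.2
  · rw [hg]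
    exact hz.1
  · rw [hg]
    exact IsEndemic.eq hd hA hirr ⟨hy, (hfixed y).1 hstep⟩ hz
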